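/- For every d ≥ 1 and j ≥ 1, the number of connected induced subgraphs of the lattice Z^d with exactly j vertices that contain the origin is at most (2de)^j. -/

import Mathlib

/-!
Explore a connected set `S ∋ 0` by breadth-first search along the `2d` unit steps, recording for
the `i`-th dequeued vertex the set of directions leading to a vertex of `S` not yet seen. Since
every vertex but the origin is discovered exactly once, these records form a `(j - 1)`-element
subset of `Fin j × directions`, and replaying the search recovers `S` from it. Hence there are at
most `C(2dj, j - 1) ≤ C(2dj, j) ≤ (2dj)^j / j! ≤ (2de)^j` such sets, the last step by
`j^j / j! ≤ e^j`.
-/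

open Finset

/-- The nearest-neighbour graph on `ℤ^d`: vertices adjacent iff ℓ¹-distance is 1. -/
def latticeGraph (d : ℕ) : SimpleGraph (Fin d → ℤ) where
  Adj x y := (∑ i, |x i - y i|) = 1
  symm := by
    constructor
    intro x y h
    rw [show (∑ i, |y i - x i|) = ∑ i, |x i - y i| from
      Finset.sum_congr rfl fun i _ => abs_sub_comm _ _]
    exact h
  loopless := by constructor; intro x h; simp at h

section BreadthFirstSearch

variable {V P : Type*} [DecidableEq V] [Fintype P] (step : V → P → V) (root : V)

noncomputable def newPorts (S : Finset V) (L : List V) (i : ℕ) : Finset P :=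
  {a | i < L.length ∧ step (L.getD i root) a ∈ S ∧ step (L.getD i root) a ∉ L}

/-- Breadth-first search of `S` from `root`: the list is both the visited set and the queue, and
step `i` dequeues the `i`-th entry and appends its unvisited neighbours in `S`. Once the queue is
exhausted (`L.length ≤ i`) no ports are added, so the default `root` of `getD` is never used. -/
noncomputable def bfs (S : Finset V) : ℕ → List V
  | 0 => [root]
  | i + 1 =>
    let L := bfs S i
    L ++ (newPorts step root S L i).toList.map (step (L.getD i root))

noncomputable def bfsCode (S : Finset V) (i : ℕ) : Finset P :=
  newPorts step root S (bfs step root S i) i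

noncomputable def replay (g : ℕ → Finset P) : ℕ → List V
  | 0 => [root]
  | i + 1 =>
    let L := replay g i
    L ++ (g i).toList.map (step (L.getD i root))

variable {step root} {S : Finset V}

theorem replay_bfsCode (S : Finset V) :
    replay step root (bfsCode step root S) = bfs step root S := by
  funext i
  induction i with
  | zero => rfl
  | succ i ih => rw [replay, ih]; rfl

theorem bfs_succ (S : Finset V) (i : ℕ) :
    bfs step root S (i + 1) = bfs step root S i ++
      (bfsCode step root S i).toList.map (step ((bfs step root S i).getD i root)) :=
  rfl

theorem mem_bfsCode {i : ℕ} {a : P} :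
    a ∈ bfsCode step root S i ↔ i < (bfs step root S i).length ∧
      step ((bfs step root S i).getD i root) a ∈ S ∧
      step ((bfs step root S i).getD i root) a ∉ bfs step root S i := by
  simp [bfsCode, newPorts]

theorem length_bfs_succ (S : Finset V) (i : ℕ) :
    (bfs step root S (i + 1)).length = (bfs step root S i).length + #(bfsCode step root S i) := by
  simp [bfs_succ]

theorem length_bfs (S : Finset V) (k : ℕ) :
    (bfs step root S k).length = 1 + ∑ i ∈ range k, #(bfsCode step root S i) := by
  induction k with
  | zero => rfl
  | succ k ih => rw [length_bfs_succ, ih, sum_range_succ, add_assoc]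

theorem bfs_prefix {i k : ℕ} (h : i ≤ k) : bfs step root S i <+: bfs step root S k := by
  induction k, h using Nat.le_induction with
  | base => exact List.prefix_refl _
  | succ k _ ih =>
    rw [bfs_succ]
    exact ih.trans (List.prefix_append _ _)

theorem bfs_subset (hroot : root ∈ S) (i : ℕ) : ∀ x ∈ bfs step root S i, x ∈ S := by
  induction i with
  | zero => simpa [bfs]
  | succ i ih =>
    intro x hx
    rw [bfs_succ, List.mem_append, List.mem_map] at hx
    rcases hx with hx | ⟨a, ha, rfl⟩
    · exact ih x hx
    · exact (mem_bfsCode.1 (mem_toList.1 ha)).2.1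

theorem bfs_nodup (hinj : ∀ v, (step v).Injective) (S : Finset V) (i : ℕ) :
    (bfs step root S i).Nodup := by
  induction i with
  | zero => simp [bfs]
  | succ i ih =>
    rw [bfs_succ]
    refine ih.append ((nodup_toList _).map (hinj _)) ?_
    rintro x hx hx'
    obtain ⟨a, ha, rfl⟩ := List.mem_map.1 hx'
    exact (mem_bfsCode.1 (mem_toList.1 ha)).2.2 hx

theorem length_bfs_le_card (hinj : ∀ v, (step v).Injective) (hroot : root ∈ S) (i : ℕ) :
    (bfs step root S i).length ≤ #S := by
  rw [← List.toFinset_card_of_nodup (bfs_nodup hinj S i)]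
  exact card_le_card fun x hx => bfs_subset hroot i x (List.mem_toFinset.1 hx)

theorem bfsCode_eq_empty_of_length_le {i : ℕ} (h : (bfs step root S i).length ≤ i) :
    bfsCode step root S i = ∅ :=
  eq_empty_of_forall_notMem fun _ ha => (mem_bfsCode.1 ha).1.not_ge h

theorem bfsCode_eq_empty (hinj : ∀ v, (step v).Injective) (hroot : root ∈ S) {i : ℕ}
    (h : #S ≤ i) : bfsCode step root S i = ∅ :=
  bfsCode_eq_empty_of_length_le ((length_bfs_le_card hinj hroot i).trans h)

theorem bfs_eq_of_length_le {i k : ℕ} (h : (bfs step root S i).length ≤ i) (hik : i ≤ k) :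
    bfs step root S k = bfs step root S i := by
  induction k, hik using Nat.le_induction with
  | base => rfl
  | succ k hik ih =>
    rw [bfs_succ, bfsCode_eq_empty_of_length_le (ih ▸ h.trans hik), ih]
    simp

theorem lt_length_bfs (hinj : ∀ v, (step v).Injective) (hroot : root ∈ S) {n : ℕ}
    (hn : n < (bfs step root S #S).length) : n < (bfs step root S n).length := by
  by_contra! h
  have hnS : n ≤ #S := hn.le.trans (length_bfs_le_card hinj hroot _)
  rw [bfs_eq_of_length_le h hnS] at hn
  exact hn.not_ge h

/-- Every vertex of the final list was dequeued, so its neighbours in `S` were enqueued. -/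
theorem step_mem_bfs (hinj : ∀ v, (step v).Injective) (hroot : root ∈ S) {v : V}
    (hv : v ∈ bfs step root S #S) {a : P} (ha : step v a ∈ S) :
    step v a ∈ bfs step root S #S := by
  obtain ⟨n, hn, rfl⟩ := List.getElem_of_mem hv
  have hnn := lt_length_bfs hinj hroot hn
  have hnS : n + 1 ≤ #S := hn.trans_le (length_bfs_le_card hinj hroot _)
  have hvertex : (bfs step root S n).getD n root = (bfs step root S #S)[n] := by
    rw [List.getD_eq_getElem _ _ hnn]
    exact (bfs_prefix (by omega)).getElem hnn
  suffices step ((bfs step root S n).getD n root) a ∈ bfs step root S (n + 1) by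
    rw [hvertex] at this
    exact (bfs_prefix hnS).subset this
  by_cases hold : step ((bfs step root S n).getD n root) a ∈ bfs step root S n
  · exact (bfs_prefix (Nat.le_succ n)).subset hold
  · rw [bfs_succ]
    refine List.mem_append_right _ (List.mem_map_of_mem (mem_toList.2 ?_))
    exact mem_bfsCode.2 ⟨hnn, hvertex ▸ ha, hold⟩

theorem bfs_toFinset {G : SimpleGraph V} (hadj : ∀ x y, G.Adj x y → ∃ a, y = step x a)
    (hinj : ∀ v, (step v).Injective) (hroot : root ∈ S)
    (hconn : (G.induce (S : Set V)).Connected) :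
    (bfs step root S #S).toFinset = S := by
  refine Subset.antisymm (fun x hx => bfs_subset hroot _ x (List.mem_toFinset.1 hx)) ?_
  intro w hw
  rw [List.mem_toFinset]
  suffices ∀ y : (S : Set V), (G.induce (S : Set V)).Reachable ⟨root, hroot⟩ y →
      (y : V) ∈ bfs step root S #S from this ⟨w, hw⟩ (hconn.preconnected _ _)
  intro y hy
  rw [SimpleGraph.reachable_iff_reflTransGen] at hy
  induction hy with
  | refl => exact (bfs_prefix (Nat.zero_le _)).subset (List.mem_singleton_self root)
  | @tail x z _ hxz ih =>
    obtain ⟨a, hz⟩ : ∃ a, (z : V) = step x a := hadj _ _ hxz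
    rw [hz]
    exact step_mem_bfs hinj hroot ih (hz ▸ z.prop)

theorem one_add_sum_card_bfsCode {G : SimpleGraph V}
    (hadj : ∀ x y, G.Adj x y → ∃ a, y = step x a) (hinj : ∀ v, (step v).Injective)
    (hroot : root ∈ S) (hconn : (G.induce (S : Set V)).Connected) :
    1 + ∑ i ∈ range #S, #(bfsCode step root S i) = #S := by
  rw [← length_bfs, ← List.toFinset_card_of_nodup (bfs_nodup hinj S _),
    bfs_toFinset hadj hinj hroot hconn]

variable (step root) in
noncomputable def bfsEncoding (j : ℕ) (S : Finset V) : Finset (Σ _ : Fin j, P) :=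
  univ.sigma fun i => bfsCode step root S i

theorem card_bfsEncoding {G : SimpleGraph V}
    (hadj : ∀ x y, G.Adj x y → ∃ a, y = step x a) (hinj : ∀ v, (step v).Injective)
    (hroot : root ∈ S) (hconn : (G.induce (S : Set V)).Connected) {j : ℕ} (hS : #S = j) :
    #(bfsEncoding step root j S) = j - 1 := by
  have hsum := one_add_sum_card_bfsCode hadj hinj hroot hconn
  rw [hS] at hsum
  rw [bfsEncoding, card_sigma, Fin.sum_univ_eq_sum_range (fun i => #(bfsCode step root S i))]
  omega

theorem bfsEncoding_injOn {G : SimpleGraph V} (hadj : ∀ x y, G.Adj x y → ∃ a, y = step x a)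
    (hinj : ∀ v, (step v).Injective) (j : ℕ) :
    Set.InjOn (bfsEncoding step root j)
      {S : Finset V | root ∈ S ∧ #S = j ∧ (G.induce (S : Set V)).Connected} := by
  rintro S ⟨hroot, hS, hconn⟩ T ⟨hroot', hT, hconn'⟩ h
  have hcode : bfsCode step root S = bfsCode step root T := by
    funext i
    rcases lt_or_ge i j with hi | hi
    · ext a
      simpa [bfsEncoding] using Finset.ext_iff.1 h ⟨⟨i, hi⟩, a⟩
    · rw [bfsCode_eq_empty hinj hroot (hS ▸ hi), bfsCode_eq_empty hinj hroot' (hT ▸ hi)]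
  have hbfs : bfs step root S = bfs step root T := by
    rw [← replay_bfsCode, hcode, replay_bfsCode]
  calc S = (bfs step root S #S).toFinset := (bfs_toFinset hadj hinj hroot hconn).symm
    _ = (bfs step root T #T).toFinset := by rw [hS, hT, hbfs]
    _ = T := bfs_toFinset hadj hinj hroot' hconn'

theorem mapsTo_bfsEncoding {G : SimpleGraph V} (hadj : ∀ x y, G.Adj x y → ∃ a, y = step x a)
    (hinj : ∀ v, (step v).Injective) (j : ℕ) :
    Set.MapsTo (bfsEncoding step root j)
      {S : Finset V | root ∈ S ∧ #S = j ∧ (G.induce (S : Set V)).Connected}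
      (powersetCard (j - 1) univ : Finset (Finset (Σ _ : Fin j, P))) := by
  rintro S ⟨hroot, hS, hconn⟩
  exact mem_powersetCard.2 ⟨subset_univ _, card_bfsEncoding hadj hinj hroot hconn hS⟩

end BreadthFirstSearch

section Counting

variable {V P : Type*} [DecidableEq V] [Fintype P] {G : SimpleGraph V} {step : V → P → V}

theorem finite_connected_finsets (hadj : ∀ x y, G.Adj x y → ∃ a, y = step x a)
    (hinj : ∀ v, (step v).Injective) (root : V) (j : ℕ) :
    {S : Finset V | root ∈ S ∧ #S = j ∧ (G.induce (S : Set V)).Connected}.Finite :=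
  Set.Finite.of_injOn (mapsTo_bfsEncoding hadj hinj j) (bfsEncoding_injOn hadj hinj j)
    (finite_toSet _)

theorem ncard_connected_finsets_le (hadj : ∀ x y, G.Adj x y → ∃ a, y = step x a)
    (hinj : ∀ v, (step v).Injective) (root : V) (j : ℕ) :
    {S : Finset V | root ∈ S ∧ #S = j ∧ (G.induce (S : Set V)).Connected}.ncard ≤
      (Fintype.card P * j).choose (j - 1) := by
  have := Set.ncard_le_ncard_of_injOn _ (mapsTo_bfsEncoding (root := root) hadj hinj j)
    (bfsEncoding_injOn hadj hinj j) (finite_toSet _)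
  simpa [mul_comm] using this

end Counting

theorem choose_mul_sub_one_le (Δ j : ℕ) (hΔ : 2 ≤ Δ) :
    ((Δ * j).choose (j - 1) : ℝ) ≤ (Δ * Real.exp 1) ^ j := by
  have hchoose : (Δ * j).choose (j - 1) ≤ (Δ * j).choose j := by
    rcases Nat.eq_zero_or_pos j with rfl | hj
    · rfl
    · have hhalf : j - 1 < Δ * j / 2 := by
        have : 2 * j ≤ Δ * j := Nat.mul_le_mul_right j hΔ
        omega
      simpa [Nat.sub_add_cancel hj] using Nat.choose_le_succ_of_lt_half_left hhalf
  calc ((Δ * j).choose (j - 1) : ℝ) ≤ (Δ * j).choose j := by exact_mod_cast hchoose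
    _ ≤ ((Δ * j : ℕ) : ℝ) ^ j / j.factorial := Nat.choose_le_pow_div j _
    _ = Δ ^ j * ((j : ℝ) ^ j / j.factorial) := by push_cast; ring
    _ ≤ Δ ^ j * Real.exp j := by
        gcongr
        exact Real.pow_div_factorial_le_exp (j : ℝ) (Nat.cast_nonneg j) j
    _ = (Δ * Real.exp 1) ^ j := by rw [mul_pow, Real.exp_one_pow]

theorem exists_eq_single_of_sum_abs_eq_one {ι : Type*} [Fintype ι] [DecidableEq ι] {z : ι → ℤ}
    (h : ∑ i, |z i| = 1) : ∃ i, ∃ u : ℤˣ, z = Pi.single i (u : ℤ) := by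
  obtain ⟨i, hi⟩ : ∃ i, z i ≠ 0 := by
    by_contra! h0
    simp [h0] at h
  have hsplit : |z i| + ∑ k ∈ univ.erase i, |z k| = 1 :=
    (add_sum_erase univ (fun k => |z k|) (mem_univ i)).trans h
  have hrest : 0 ≤ ∑ k ∈ univ.erase i, |z k| := sum_nonneg fun k _ => abs_nonneg _
  have hzi : 1 ≤ |z i| := Int.one_le_abs hi
  have hzero : ∀ k ∈ univ.erase i, |z k| = 0 :=
    (sum_eq_zero_iff_of_nonneg fun k _ => abs_nonneg _).1 (by omega)
  refine ⟨i, ((Int.isUnit_iff_abs_eq (x := z i)).2 (by omega)).unit, funext fun k => ?_⟩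
  rcases eq_or_ne k i with rfl | hk
  · simp
  · simpa [hk] using hzero k (mem_erase.2 ⟨hk, mem_univ k⟩)

def latticeStep (d : ℕ) (x : Fin d → ℤ) (p : Fin d × ℤˣ) : Fin d → ℤ :=
  x + Pi.single p.1 (p.2 : ℤ)

theorem latticeStep_injective (d : ℕ) (x : Fin d → ℤ) : (latticeStep d x).Injective := by
  rintro ⟨i, u⟩ ⟨i', u'⟩ h
  have hsingle : (Pi.single i (u : ℤ) : Fin d → ℤ) = Pi.single i' (u' : ℤ) := by
    simpa [latticeStep] using h
  obtain rfl : i = i' := by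
    by_contra hne
    simpa [Pi.single_apply, hne] using congrFun hsingle i
  simpa [Units.ext_iff] using Pi.single_injective i hsingle

theorem exists_latticeStep_of_adj {d : ℕ} {x y : Fin d → ℤ} (h : (latticeGraph d).Adj x y) :
    ∃ p, y = latticeStep d x p := by
  have habs : ∑ i, |(y - x) i| = 1 := by
    rw [← h]
    exact sum_congr rfl fun i _ => abs_sub_comm _ _
  obtain ⟨i, u, hyx⟩ := exists_eq_single_of_sum_abs_eq_one habs
  exact ⟨(i, u), by rw [latticeStep, ← hyx, add_sub_cancel]⟩

theorem card_connected_subgraphs_le_general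
    (d j : ℕ) (hd : 1 ≤ d) :
    {S : Finset (Fin d → ℤ) | 0 ∈ S ∧ S.card = j ∧
        ((latticeGraph d).induce (↑S : Set (Fin d → ℤ))).Connected}.Finite ∧
    ({S : Finset (Fin d → ℤ) | 0 ∈ S ∧ S.card = j ∧
        ((latticeGraph d).induce (↑S : Set (Fin d → ℤ))).Connected}.ncard : ℝ) ≤
      (2 * d * Real.exp 1) ^ j := by
  have hadj : ∀ x y, (latticeGraph d).Adj x y → ∃ p, y = latticeStep d x p :=
    fun _ _ => exists_latticeStep_of_adj
  refine ⟨finite_connected_finsets hadj (latticeStep_injective d) 0 j, ?_⟩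
  have hcard : Fintype.card (Fin d × ℤˣ) = 2 * d := by simp [mul_comm]
  calc _ ≤ ((2 * d * j).choose (j - 1) : ℝ) := by
        exact_mod_cast hcard ▸ ncard_connected_finsets_le hadj (latticeStep_injective d) 0 j
    _ ≤ (2 * d * Real.exp 1) ^ j := by
        exact_mod_cast choose_mul_sub_one_le (2 * d) j (by omega)

/-- the number of connected (induced) subgraphs of `ℤ^d` with exactly `j`
vertices containing the origin is at most `(2de)^j`. -/
theorem card_connected_subgraphs_le
    (d j : ℕ) (hd : 1 ≤ d) (hj : 1 ≤ j) :
    {S : Finset (Fin d → ℤ) | 0 ∈ S ∧ S.card = j ∧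
        ((latticeGraph d).induce (↑S : Set (Fin d → ℤ))).Connected}.Finite ∧
    ({S : Finset (Fin d → ℤ) | 0 ∈ S ∧ S.card = j ∧
        ((latticeGraph d).induce (↑S : Set (Fin d → ℤ))).Connected}.ncard : ℝ) ≤
      (2 * d * Real.exp 1) ^ j :=
  card_connected_subgraphs_le_general d j hd
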